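/- Let H(s) = ∫_s^∞ h(t−1) dt and κ = 0.9214. Then H(s) ≤ κ·s·h(s) for all s ≥ 3, and H(3) ≤ κ·s·h(s) for all 1 ≤ s ≤ 3. -/

import Mathlib

open Real

/-- The function `h(s)`: `e⁻²` for `1 ≤ s ≤ 2`, `e⁻ˢ` for `2 ≤ s ≤ 3`,
and `3 s⁻¹ e⁻ˢ` for `s ≥ 3`. -/
noncomputable def hfun (s : ℝ) : ℝ :=
  if s ≤ 2 then Real.exp (-2) else if s ≤ 3 then Real.exp (-s) else 3 / s * Real.exp (-s)

/-- `H(s) = ∫_s^∞ h(t-1) dt`. -/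
noncomputable def Hfun (s : ℝ) : ℝ := ∫ t in Set.Ioi s, hfun (t - 1)

/-!
Since `H(s) = ∫_{s-1}^∞ h` and `h(u) ≤ e⁻ᵘ` for `u ≥ 2`, we get `H(s) ≤ e^{1-s} = e · e⁻ˢ`,
which is at most `3κ e⁻ˢ = κ s h(s)` for `s ≥ 3`.

The second bound is tight (`H(3) / e⁻² ≈ 0.92136`). Here `H(3) = e⁻² - e⁻³ + 3 ∫_3^∞ e⁻ᵘ / u du`,
and the exponential integral is bounded by `∫_3^∞ e⁻ᵘ P(u) du = e⁻³ (P + P' + P'' + ⋯)(3)` for a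
polynomial `P ≥ 1/u` on `[3, ∞)` chosen as a Gauss–Radau interpolant. It remains to note that
`s h(s) ≥ e⁻²` on `[1, 3]`.
-/

open Set MeasureTheory Filter Topology Polynomial

namespace Polynomial

theorem tendsto_exp_neg_mul_eval_atTop (p : ℝ[X]) :
    Tendsto (fun x ↦ exp (-x) * p.eval x) atTop (𝓝 0) := by
  simpa [exp_neg, div_eq_inv_mul] using p.tendsto_div_exp_atTop

theorem hasDerivAt_neg_exp_neg_mul_eval_sumIDeriv (p : ℝ[X]) (x : ℝ) :
    HasDerivAt (fun x ↦ -(exp (-x) * p.sumIDeriv.eval x)) (exp (-x) * p.eval x) x := by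
  refine ((hasDerivAt_neg x).exp.mul (p.sumIDeriv.hasDerivAt x)).neg.congr_deriv ?_
  have h := congrArg (eval x) (sumIDeriv_eq_self_add p)
  rw [eval_add] at h
  linear_combination exp (-x) * h

variable {p : ℝ[X]} {a : ℝ}

theorem integrableOn_exp_neg_mul_eval (hp : ∀ x ∈ Ioi a, 0 ≤ p.eval x) :
    IntegrableOn (fun x ↦ exp (-x) * p.eval x) (Ioi a) :=
  integrableOn_Ioi_deriv_of_nonneg' (fun x _ ↦ p.hasDerivAt_neg_exp_neg_mul_eval_sumIDeriv x)
    (fun x hx ↦ mul_nonneg (exp_pos _).le (hp x hx))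
    (by simpa using (p.sumIDeriv.tendsto_exp_neg_mul_eval_atTop).neg)

theorem integral_Ioi_exp_neg_mul_eval (hp : ∀ x ∈ Ioi a, 0 ≤ p.eval x) :
    ∫ x in Ioi a, exp (-x) * p.eval x = exp (-a) * p.sumIDeriv.eval a := by
  rw [integral_Ioi_of_hasDerivAt_of_nonneg'
    (fun x _ ↦ p.hasDerivAt_neg_exp_neg_mul_eval_sumIDeriv x)
    (fun x hx ↦ mul_nonneg (exp_pos _).le (hp x hx))
    (by simpa using (p.sumIDeriv.tendsto_exp_neg_mul_eval_atTop).neg)]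
  ring

end Polynomial

/- `u P(u) - 1 = c (u - 3) q(u)²`, where the roots `15/4, 28/5, 35/4, 14` of `q` approximate `3`
plus the free nodes of the five-point Gauss–Radau rule for the weight `e⁻ᵛ` on `[0, ∞)`; this makes
`∫_3^∞ e⁻ᵘ P(u) du` exceed `∫_3^∞ e⁻ᵘ / u du` by less than `10⁻⁶`. -/
noncomputable def radauPoly : ℝ[X] :=
  C (67 / 42) + C (-27611 / 25200) * X + C (393319 / 926100) * X ^ 2 +
    C (-88390541 / 864360000) * X ^ 3 + C (19174537 / 1210104000) * X ^ 4 +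
    C (-12537439 / 7941307500) * X ^ 5 + C (129029 / 1323551250) * X ^ 6 +
    C (-64 / 18907875) * X ^ 7 + C (4 / 79413075) * X ^ 8

theorem inv_le_eval_radauPoly {u : ℝ} (hu : 3 ≤ u) : u⁻¹ ≤ radauPoly.eval u := by
  have h : u * radauPoly.eval u - 1 =
      4 / 79413075 * ((u - 3) * ((u - 15 / 4) * (u - 28 / 5) * (u - 35 / 4) * (u - 14)) ^ 2) := by
    simp only [radauPoly, eval_add, eval_mul, eval_C, eval_X, eval_pow]
    ring
  rw [inv_le_iff_one_le_mul₀' (by linarith)]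
  nlinarith [mul_nonneg (sub_nonneg.2 hu)
    (sq_nonneg ((u - 15 / 4) * (u - 28 / 5) * (u - 35 / 4) * (u - 14)))]

theorem eval_sumIDeriv_radauPoly : radauPoly.sumIDeriv.eval 3 = 951510397 / 3630312000 := by
  rw [sumIDeriv_apply_of_le (n := 8)]
  · norm_num [Finset.sum_range_succ, radauPoly, Function.iterate_succ_apply']
  · unfold radauPoly; compute_degree

theorem hfun_nonneg (u : ℝ) : 0 ≤ hfun u := by
  unfold hfun
  split_ifs with h₂ h₃
  · positivity
  · positivity
  · have : 0 < u := by linarith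
    positivity

theorem measurable_hfun : Measurable hfun := by
  unfold hfun
  refine Measurable.ite measurableSet_Iic measurable_const (Measurable.ite measurableSet_Iic ?_ ?_)
    <;> fun_prop

theorem hfun_eq_exp_neg {u : ℝ} (hu : u ∈ Icc 2 3) : hfun u = exp (-u) := by
  rcases eq_or_lt_of_le hu.1 with rfl | h₂
  · simp [hfun]
  · simp [hfun, not_le.2 h₂, hu.2]

theorem hfun_of_three_lt {u : ℝ} (hu : 3 < u) : hfun u = 3 / u * exp (-u) := by
  simp [hfun, not_le.2 hu, not_le.2 (by linarith : (2 : ℝ) < u)]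

theorem hfun_le_exp_neg {u : ℝ} (hu : 2 ≤ u) : hfun u ≤ exp (-u) := by
  rcases le_or_gt u 3 with h₃ | h₃
  · exact (hfun_eq_exp_neg ⟨hu, h₃⟩).le
  · rw [hfun_of_three_lt h₃]
    exact mul_le_of_le_one_left (exp_pos _).le ((div_le_one (by linarith)).2 h₃.le)

theorem integrableOn_hfun {a : ℝ} (ha : 2 ≤ a) : IntegrableOn hfun (Ioi a) := by
  refine (integrableOn_exp_neg_Ioi a).mono' measurable_hfun.aestronglyMeasurable ?_
  filter_upwards [ae_restrict_mem measurableSet_Ioi] with u hu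
  rw [Real.norm_of_nonneg (hfun_nonneg u)]
  exact hfun_le_exp_neg (ha.trans (le_of_lt hu))

theorem Hfun_eq (s : ℝ) : Hfun s = ∫ u in Ioi (s - 1), hfun u := by
  have h := (measurePreserving_sub_right volume (1 : ℝ)).setIntegral_preimage_emb
    (measurableEmbedding_subRight 1) hfun (Ioi (s - 1))
  rwa [preimage_sub_const_Ioi, sub_add_cancel] at h

theorem Hfun_le_exp_one_sub {s : ℝ} (hs : 3 ≤ s) : Hfun s ≤ exp (1 - s) := by
  rw [Hfun_eq, show 1 - s = -(s - 1) by ring, ← integral_exp_neg_Ioi]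
  exact setIntegral_mono_on (integrableOn_hfun (by linarith)) (integrableOn_exp_neg_Ioi _)
    measurableSet_Ioi fun u hu ↦ hfun_le_exp_neg (by linarith [mem_Ioi.1 hu])

theorem Hfun_three_le : Hfun 3 ≤ 0.9214 * exp (-2) := by
  have hP : ∀ u ∈ Ioi (3 : ℝ), 0 ≤ radauPoly.eval u := fun u hu ↦
    (inv_pos.2 (by linarith [mem_Ioi.1 hu])).le.trans (inv_le_eval_radauPoly (le_of_lt hu))
  have hhead : ∫ u in (2 : ℝ)..3, hfun u = exp (-2) - exp (-3) := by
    rw [intervalIntegral.integral_congr (g := fun u ↦ exp (-u)) fun u hu ↦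
        hfun_eq_exp_neg (by rwa [uIcc_of_le (by norm_num)] at hu),
      ← intervalIntegral.integral_Ioi_sub_Ioi (integrableOn_exp_neg_Ioi 2) (by norm_num),
      integral_exp_neg_Ioi, integral_exp_neg_Ioi]
  have htail : ∫ u in Ioi (3 : ℝ), hfun u ≤ 3 * (exp (-3) * radauPoly.sumIDeriv.eval 3) := by
    rw [← integral_Ioi_exp_neg_mul_eval hP, ← integral_const_mul]
    refine setIntegral_mono_on (integrableOn_hfun (by norm_num))
      ((integrableOn_exp_neg_mul_eval hP).const_mul 3) measurableSet_Ioi fun u hu ↦ ?_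
    calc hfun u = 3 * (exp (-u) * u⁻¹) := by rw [hfun_of_three_lt hu]; ring
      _ ≤ 3 * (exp (-u) * radauPoly.eval u) := by
        gcongr; exact inv_le_eval_radauPoly (le_of_lt hu)
  rw [eval_sumIDeriv_radauPoly] at htail
  calc Hfun 3 = (∫ u in (2 : ℝ)..3, hfun u) + ∫ u in Ioi (3 : ℝ), hfun u := by
        rw [Hfun_eq, intervalIntegral.integral_interval_add_Ioi (integrableOn_hfun le_rfl)
          (integrableOn_hfun (by norm_num))]
        norm_num
    _ ≤ exp (-2) - exp (-3) + 3 * (exp (-3) * (951510397 / 3630312000)) := by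
        rw [hhead]; gcongr
    _ ≤ 0.9214 * exp (-2) := by
        rw [show exp (-2) = exp (-3) * exp 1 by rw [← exp_add]; norm_num]
        nlinarith [exp_one_lt_d9, exp_pos (-3)]

theorem mul_hfun_of_three_le {s : ℝ} (hs : 3 ≤ s) : s * hfun s = 3 * exp (-s) := by
  rcases eq_or_lt_of_le hs with rfl | h₃
  · rw [hfun_eq_exp_neg ⟨by norm_num, le_rfl⟩]
  · rw [hfun_of_three_lt h₃]
    field_simp

theorem exp_neg_two_le_mul_hfun {s : ℝ} (h₁ : 1 ≤ s) (h₃ : s ≤ 3) : exp (-2) ≤ s * hfun s := by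
  rcases le_or_gt s 2 with h₂ | h₂
  · simp only [hfun, if_pos h₂]
    exact le_mul_of_one_le_left (exp_pos _).le h₁
  rw [hfun_eq_exp_neg ⟨h₂.le, h₃⟩]
  -- `e^{s-2} ≤ e / (4 - s) ≤ s` on `[2, 3]`, from `4 - s ≤ e^{3-s}` and `e < 3 ≤ s (4 - s)`.
  have h_tangent : 4 - s ≤ exp (3 - s) := by linarith [add_one_le_exp (3 - s)]
  have h_prod : exp (s - 2) * exp (3 - s) = exp 1 := by rw [← exp_add]; ring_nf
  have h_quad : exp 1 ≤ s * (4 - s) := by nlinarith [exp_one_lt_d9]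
  have h_key : exp (s - 2) ≤ s := by
    have : exp (s - 2) * (4 - s) ≤ s * (4 - s) := by
      nlinarith [mul_le_mul_of_nonneg_left h_tangent (exp_pos (s - 2)).le]
    exact le_of_mul_le_mul_right this (by linarith)
  calc exp (-2) = exp (-s) * exp (s - 2) := by rw [← exp_add]; ring_nf
    _ ≤ exp (-s) * s := by gcongr
    _ = s * exp (-s) := mul_comm _ _

/-- Theorem 2.6: with `κ = 0.9214`, `H(s) ≤ κ s h(s)` for `s ≥ 3` and
`H(3) ≤ κ s h(s)` for `1 ≤ s ≤ 3`. -/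
theorem Hfun_kappa_bound :
    (∀ s : ℝ, 3 ≤ s → Hfun s ≤ 0.9214 * s * hfun s) ∧
    (∀ s : ℝ, 1 ≤ s → s ≤ 3 → Hfun 3 ≤ 0.9214 * s * hfun s) := by
  refine ⟨fun s hs ↦ ?_, fun s h₁ h₃ ↦ ?_⟩
  · calc Hfun s ≤ exp (1 - s) := Hfun_le_exp_one_sub hs
      _ = exp 1 * exp (-s) := by rw [← exp_add]; ring_nf
      _ ≤ 0.9214 * (3 * exp (-s)) := by nlinarith [exp_one_lt_d9, exp_pos (-s)]
      _ = 0.9214 * s * hfun s := by rw [mul_assoc, mul_hfun_of_three_le hs]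
  · calc Hfun 3 ≤ 0.9214 * exp (-2) := Hfun_three_le
      _ ≤ 0.9214 * (s * hfun s) := by gcongr; exact exp_neg_two_le_mul_hfun h₁ h₃
      _ = 0.9214 * s * hfun s := by ring
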